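/- Let A ∈ ℝ^{n×n} be Schur stable and M ∈ ℝ^{n×n}. Then the series S := Σ_{k=0}^{∞} (Aᵀ)^k M A^k converges and S is the unique solution of the discrete Lyapunov equation AᵀSA − S + M = 0. Moreover, if M is symmetric then S is symmetric, and if M is symmetric positive definite then S is symmetric positive definite. -/

import Mathlib

open Matrix Filter

/-- A real square matrix is Schur stable if every eigenvalue of it, regarded as a complex
matrix, has modulus strictly less than `1`. -/
def SchurStable {ι : Type*} [Fintype ι] [DecidableEq ι] (A : Matrix ι ι ℝ) : Prop :=
  ∀ μ : ℂ, ((A.map Complex.ofReal).charpoly).IsRoot μ → ‖μ‖ < 1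

/-!
Schur stability says that the complexification of `A` has spectral radius `< 1`, so by
Gelfand's formula `‖A ^ k‖ ≤ r ^ k` eventually, for some `r < 1`. In the Frobenius norm, which
is invariant under transposition and under `ℝ → ℂ`, this bounds `‖(Aᵀ) ^ k * M * A ^ k‖` by
`‖M‖ (r ^ 2) ^ k`, so the series converges; splitting off its first term gives
`S = Aᵀ S A + M`. Two solutions differ by a fixed point `D` of `X ↦ Aᵀ X A`, and then
`D = (Aᵀ) ^ k D A ^ k` is the general term of a convergent series, so `D = 0`. Symmetry and
positive semidefiniteness of `S` pass to the limit termwise, and `S = M + Aᵀ S A` is then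
positive definite whenever `M` is.
-/

open scoped NNReal ENNReal

theorem spectrum.eventually_nnnorm_pow_le_of_spectralRadius_lt {A : Type*} [NormedRing A]
    [NormedAlgebra ℂ A] [CompleteSpace A] {a : A} {r : ℝ≥0} (h : spectralRadius ℂ a < r) :
    ∀ᶠ k : ℕ in atTop, ‖a ^ k‖₊ ≤ r ^ k := by
  filter_upwards [(pow_nnnorm_pow_one_div_tendsto_nhds_spectralRadius a).eventually_lt_const h,
    eventually_gt_atTop 0] with k hk hk0
  rw [one_div, ENNReal.rpow_inv_lt_iff (by positivity), ENNReal.rpow_natCast] at hk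
  exact_mod_cast hk.le

theorem mul_mul_add_eq_of_hasSum_pow_mul_mul_pow {R : Type*} [Ring R] [TopologicalSpace R]
    [IsTopologicalRing R] [T2Space R] {b c m s : R}
    (h : HasSum (fun k : ℕ => b ^ k * m * c ^ k) s) : b * s * c + m = s := by
  have hterm (k : ℕ) : b * (b ^ k * m * c ^ k) * c = b ^ (k + 1) * m * c ^ (k + 1) := by
    rw [pow_succ', pow_succ]
    simp only [mul_assoc]
  have hshift : HasSum (fun k : ℕ => b ^ (k + 1) * m * c ^ (k + 1)) (b * s * c) := by
    simpa only [hterm] using (h.mul_left b).mul_right c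
  rw [add_comm]
  simpa using (HasSum.zero_add (f := fun k : ℕ => b ^ k * m * c ^ k) hshift).unique h

theorem pow_mul_mul_pow_eq_of_mul_mul_eq {R : Type*} [Monoid R] {b c d : R}
    (h : b * d * c = d) (k : ℕ) : b ^ k * d * c ^ k = d := by
  induction k with
  | zero => simp
  | succ k ih =>
    calc b ^ (k + 1) * d * c ^ (k + 1) = b ^ k * (b * d * c) * c ^ k := by
          rw [pow_succ, pow_succ']
          simp only [mul_assoc]
      _ = d := by rw [h, ih]

theorem Matrix.IsSymm.of_hasSum {β ι R : Type*} [AddCommMonoid R] [TopologicalSpace R]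
    [T2Space R] {f : β → Matrix ι ι R} {S : Matrix ι ι R} (h : HasSum f S)
    (hf : ∀ k, (f k).IsSymm) : S.IsSymm :=
  h.matrix_transpose.unique (by simpa only [fun k => (hf k).eq] using h)

theorem Matrix.PosSemidef.of_hasSum {β ι : Type*} [Fintype ι] {f : β → Matrix ι ι ℝ}
    {S : Matrix ι ι ℝ} (h : HasSum f S) (hf : ∀ k, (f k).PosSemidef) : S.PosSemidef := by
  refine .of_dotProduct_mulVec_nonneg ?_ fun x => ?_
  · exact isHermitian_iff_isSymm.mpr
      (IsSymm.of_hasSum h fun k => isHermitian_iff_isSymm.mp (hf k).isHermitian)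
  · have hquad := h.map (AddMonoidHom.mk' (fun X => star x ⬝ᵥ X *ᵥ x) fun X Y => by
      rw [add_mulVec, dotProduct_add])
      (continuous_const.dotProduct (continuous_id.matrix_mulVec continuous_const))
    exact hquad.nonneg fun k => (hf k).dotProduct_mulVec_nonneg x

theorem Matrix.transpose_pow_mul_mul_pow_eq_conjTranspose {ι : Type*} [Fintype ι] [DecidableEq ι]
    (A M : Matrix ι ι ℝ) (k : ℕ) : (Aᵀ) ^ k * M * A ^ k = (A ^ k)ᴴ * M * A ^ k := by
  rw [conjTranspose_eq_transpose_of_trivial, transpose_pow]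

namespace SchurStable

variable {ι : Type*} [Fintype ι] [DecidableEq ι] {A : Matrix ι ι ℝ}

section Frobenius

open scoped Matrix.Norms.Frobenius

theorem spectralRadius_lt_one (hA : SchurStable A) :
    spectralRadius ℂ (A.map Complex.ofReal) < 1 := by
  rcases (spectrum ℂ (A.map Complex.ofReal)).eq_empty_or_nonempty with h | h
  · simp [spectralRadius, h]
  · exact spectrum.spectralRadius_lt_of_forall_lt_of_nonempty h fun z hz => by
      simpa [← NNReal.coe_lt_coe] using hA z (mem_spectrum_iff_isRoot_charpoly.mp hz)

theorem exists_eventually_norm_pow_le (hA : SchurStable A) :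
    ∃ r : ℝ, 0 ≤ r ∧ r < 1 ∧ ∀ᶠ k : ℕ in atTop, ‖A ^ k‖ ≤ r ^ k := by
  obtain ⟨r, hρr, hr1⟩ := ENNReal.lt_iff_exists_nnreal_btwn.mp hA.spectralRadius_lt_one
  refine ⟨r, r.2, by exact_mod_cast hr1, ?_⟩
  filter_upwards [spectrum.eventually_nnnorm_pow_le_of_spectralRadius_lt hρr] with k hk
  have hmap : A.map Complex.ofReal ^ k = (A ^ k).map Complex.ofReal :=
    (A.map_pow Complex.ofRealHom k).symm
  rw [hmap, frobenius_nnnorm_map_eq _ _ Complex.nnnorm_real] at hk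
  exact_mod_cast hk

theorem summable_transpose_pow_mul_mul_pow (hA : SchurStable A) (M : Matrix ι ι ℝ) :
    Summable fun k : ℕ => (Aᵀ) ^ k * M * A ^ k := by
  obtain ⟨r, hr0, hr1, hr⟩ := hA.exists_eventually_norm_pow_le
  refine Summable.of_norm_bounded_eventually_nat ((summable_geometric_of_lt_one (by positivity)
    (pow_lt_one₀ hr0 hr1 two_ne_zero)).mul_left ‖M‖) ?_
  filter_upwards [hr] with k hk
  calc ‖(Aᵀ) ^ k * M * A ^ k‖ ≤ ‖(Aᵀ) ^ k‖ * ‖M‖ * ‖A ^ k‖ := norm_mul₃_le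
    _ = ‖A ^ k‖ * ‖M‖ * ‖A ^ k‖ := by rw [← transpose_pow, frobenius_norm_transpose]
    _ ≤ r ^ k * ‖M‖ * r ^ k := by gcongr
    _ = ‖M‖ * (r ^ 2) ^ k := by ring

end Frobenius

theorem eq_zero_of_transpose_mul_mul_eq {D : Matrix ι ι ℝ} (hA : SchurStable A)
    (hD : Aᵀ * D * A = D) : D = 0 := by
  have h := (hA.summable_transpose_pow_mul_mul_pow D).tendsto_atTop_zero
  simp only [pow_mul_mul_pow_eq_of_mul_mul_eq hD] at h
  exact tendsto_const_nhds_iff.mp h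

end SchurStable

theorem stmt11 {n : ℕ} (A M : Matrix (Fin n) (Fin n) ℝ) (hA : SchurStable A) :
    ∃ S : Matrix (Fin n) (Fin n) ℝ,
      HasSum (fun k : ℕ => (Aᵀ) ^ k * M * A ^ k) S ∧
      (Aᵀ * S * A - S + M = 0) ∧
      (∀ S' : Matrix (Fin n) (Fin n) ℝ, Aᵀ * S' * A - S' + M = 0 → S' = S) ∧
      (M.IsSymm → S.IsSymm) ∧
      (M.IsSymm → M.PosDef → S.PosDef) := by
  obtain ⟨S, hS⟩ := hA.summable_transpose_pow_mul_mul_pow M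
  have hfix : Aᵀ * S * A + M = S := mul_mul_add_eq_of_hasSum_pow_mul_mul_pow hS
  refine ⟨S, hS, by rw [sub_add_eq_add_sub, hfix, sub_self], fun S' hS' => ?_, fun hM => ?_,
    fun _ hM => ?_⟩
  · refine sub_eq_zero.mp (hA.eq_zero_of_transpose_mul_mul_eq ?_)
    calc Aᵀ * (S' - S) * A = (Aᵀ * S' * A - S' + M) - (Aᵀ * S * A + M - S) + (S' - S) := by
          noncomm_ring
      _ = S' - S := by rw [hS', hfix, sub_self, sub_zero, zero_add]
  · refine IsSymm.of_hasSum hS fun k => ?_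
    rw [transpose_pow_mul_mul_pow_eq_conjTranspose, ← isHermitian_iff_isSymm]
    exact isHermitian_conjTranspose_mul_mul _ (isHermitian_iff_isSymm.mpr hM)
  · have hS_psd : S.PosSemidef := PosSemidef.of_hasSum hS fun k => by
      rw [transpose_pow_mul_mul_pow_eq_conjTranspose]
      exact hM.posSemidef.conjTranspose_mul_mul_same _
    rw [← hfix, add_comm]
    exact hM.add_posSemidef (by simpa using hS_psd.conjTranspose_mul_mul_same A)
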